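/- arXiv:2112.09890 — 6 statements merged into one kernel-verified Lean document; each statement's English description precedes it below -/
import Mathlib

section
/- For any K ∈ 𝒦, defining λ^(ℓ) = ∏_{(j,i): K̂^(ℓ)_ij = 1} K_ij for each extreme action K̂^(ℓ) ∈ 𝒦̂, the coefficients λ^(ℓ) are nonnegative, sum to 1 over all ℓ, and satisfy K = ∑_ℓ λ^(ℓ) K̂^(ℓ). -/
open Finset

/-- Left-stochastic matrix supported on adjacency pattern `A`. -/
def IsStoch {I : Type*} [Fintype I] (A K : Matrix I I ℝ) : Prop :=
  (∀ i j, 0 ≤ K i j) ∧ (∀ j, ∑ i, K i j = 1) ∧ ∀ i j, A i j = 0 → K i j = 0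

/-- `{0,1}`-valued left-stochastic matrix supported on `A` (extreme action). -/
def IsExtreme01 {I : Type*} [Fintype I] (A K : Matrix I I ℝ) : Prop :=
  IsStoch A K ∧ ∀ i j, K i j = 0 ∨ K i j = 1

/-- The coefficient $λ^{(ℓ)} = ∏_{(j,i): K̂^{(ℓ)}_{ij}=1} K_{ij}$. -/
noncomputable def lam {N : ℕ} (K M : Matrix (Fin N) (Fin N) ℝ) : ℝ :=
  ∏ p ∈ Finset.univ.filter (fun p : Fin N × Fin N => M p.1 p.2 = 1), K p.1 p.2

theorem stmt3 {N : ℕ} (A K : Matrix (Fin N) (Fin N) ℝ)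
    (hA01 : ∀ i j, A i j = 0 ∨ A i j = 1)
    (hcol : ∀ j, ∃ i, A i j = 1)
    (hK : IsStoch A K)
    (ext : Finset (Matrix (Fin N) (Fin N) ℝ))
    (hext : ∀ M, M ∈ ext ↔ IsExtreme01 A M) :
    (∀ M ∈ ext, 0 ≤ lam K M) ∧
    (∑ M ∈ ext, lam K M = 1) ∧
    K = ∑ M ∈ ext, lam K M • M := by
  classical
  obtain ⟨hKnn, hKsum, hKsupp⟩ := hK
  set S : Fin N → Finset (Fin N) := fun j => univ.filter (fun i => A i j = 1) with hS
  set Mf : (Fin N → Fin N) → Matrix (Fin N) (Fin N) ℝ :=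
    fun f => Matrix.of (fun i j => if f j = i then (1 : ℝ) else 0) with hMfdef
  have hMfapp : ∀ f i j, Mf f i j = if f j = i then (1 : ℝ) else 0 := fun f i j => rfl
  -- column sums over S equal 1
  have hSsum : ∀ j, ∑ i ∈ S j, K i j = 1 := by
    intro j
    rw [← hKsum j]
    apply Finset.sum_subset (Finset.subset_univ _)
    intro i _ hi
    refine hKsupp i j ?_
    rcases hA01 i j with h | h
    · exact h
    · exact absurd (Finset.mem_filter.mpr ⟨Finset.mem_univ i, h⟩) hi
  -- Mf maps piFinset S into ext
  have hMfmem : ∀ f ∈ Fintype.piFinset S, Mf f ∈ ext := by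
    intro f hf
    rw [hext]
    have hfS : ∀ j, A (f j) j = 1 := by
      intro j
      have := (Fintype.mem_piFinset.mp hf) j
      exact (Finset.mem_filter.mp this).2
    refine ⟨⟨?_, ?_, ?_⟩, ?_⟩
    · intro i j; rw [hMfapp]; split <;> norm_num
    · intro j
      simp only [hMfapp]
      rw [Finset.sum_ite_eq univ (f j) (fun _ => (1:ℝ))]
      simp
    · intro i j hAij
      rw [hMfapp, if_neg]
      intro h
      have := hfS j
      rw [h, hAij] at this
      norm_num at this
    · intro i j; rw [hMfapp]; split
      · right; rfl
      · left; rfl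
  -- ext is the image of piFinset S under Mf
  have hext_eq : ext = (Fintype.piFinset S).image Mf := by
    ext M
    constructor
    · intro hM
      obtain ⟨⟨hnn, hsum, hsupp⟩, h01⟩ := (hext M).mp hM
      have hone : ∀ j, ∃ i, M i j = 1 := by
        intro j
        by_contra hno
        push_neg at hno
        have hz : ∀ i ∈ (univ : Finset (Fin N)), M i j = 0 :=
          fun i _ => (h01 i j).resolve_right (hno i)
        have hzz := hsum j
        rw [Finset.sum_eq_zero hz] at hzz
        norm_num at hzz
      choose f hfone using hone
      refine Finset.mem_image.mpr ⟨f, ?_, ?_⟩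
      · rw [Fintype.mem_piFinset]
        intro j
        refine Finset.mem_filter.mpr ⟨Finset.mem_univ _, ?_⟩
        rcases hA01 (f j) j with h | h
        · exact absurd (hsupp _ _ h) (by rw [hfone j]; norm_num)
        · exact h
      · funext i j
        rw [hMfapp]
        by_cases h : f j = i
        · rw [if_pos h, ← h, hfone j]
        · rw [if_neg h]
          -- other entries in the column are 0
          have hsplit : M (f j) j + ∑ i' ∈ univ.erase (f j), M i' j = 1 := by
            rw [Finset.add_sum_erase univ (fun i' => M i' j) (Finset.mem_univ (f j))]
            exact hsum j
          rw [hfone j] at hsplit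
          have hzero : ∑ i' ∈ univ.erase (f j), M i' j = 0 := by linarith
          have := (Finset.sum_eq_zero_iff_of_nonneg
            (fun i' _ => hnn i' j)).mp hzero i
            (Finset.mem_erase.mpr ⟨fun hc => h hc.symm, Finset.mem_univ i⟩)
          exact this.symm
    · intro hM
      obtain ⟨f, hf, rfl⟩ := Finset.mem_image.mp hM
      exact hMfmem f hf
  -- injectivity of Mf on piFinset S
  have hinj : ∀ f ∈ Fintype.piFinset S, ∀ g ∈ Fintype.piFinset S, Mf f = Mf g → f = g := by
    intro f _ g _ h
    funext j
    have : Mf g (f j) j = 1 := by rw [← h, hMfapp, if_pos rfl]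
    rw [hMfapp] at this
    by_contra hc
    rw [if_neg (fun hh => hc hh.symm)] at this
    norm_num at this
  -- lam of Mf f
  have hlam : ∀ f : Fin N → Fin N, lam K (Mf f) = ∏ j, K (f j) j := by
    intro f
    unfold lam
    rw [Finset.prod_filter]
    rw [Fintype.prod_prod_type]
    rw [Finset.prod_comm]
    refine Finset.prod_congr rfl (fun j _ => ?_)
    have : ∀ i, (if Mf f i j = 1 then K i j else 1) = if f j = i then K i j else 1 := by
      intro i
      rw [hMfapp]
      by_cases h : f j = i
      · rw [if_pos h, if_pos rfl, if_pos h]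
      · rw [if_neg h, if_neg (by norm_num), if_neg h]
    rw [Finset.prod_congr rfl (fun i _ => this i),
      Finset.prod_ite_eq univ (f j) (fun i => K i j), if_pos (Finset.mem_univ _)]
  -- nonnegativity
  refine ⟨?_, ?_, ?_⟩
  · intro M _
    exact Finset.prod_nonneg (fun p _ => hKnn p.1 p.2)
  · rw [hext_eq, Finset.sum_image hinj]
    have := Finset.prod_univ_sum S (fun j i => K i j)
    rw [Finset.sum_congr rfl (fun f _ => hlam f), ← this]
    simp [hSsum]
  · funext i j
    rw [Matrix.sum_apply]
    rw [hext_eq, Finset.sum_image hinj]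
    have step1 : ∀ f, (lam K (Mf f) • Mf f) i j
        = if f j = i then ∏ j', K (f j') j' else 0 := by
      intro f
      rw [Matrix.smul_apply, smul_eq_mul, hMfapp, hlam]
      by_cases h : f j = i
      · rw [if_pos h, if_pos h, mul_one]
      · rw [if_neg h, if_neg h, mul_zero]
    rw [Finset.sum_congr rfl (fun f _ => step1 f), ← Finset.sum_filter]
    -- identify filtered set with piFinset of updated family
    set T : Fin N → Finset (Fin N) := Function.update S j ((S j).filter (fun i' => i' = i)) with hT
    have hfilter : (Fintype.piFinset S).filter (fun f => f j = i) = Fintype.piFinset T := by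
      ext g
      simp only [Finset.mem_filter, Fintype.mem_piFinset, hT]
      constructor
      · rintro ⟨hg, hgj⟩ a
        by_cases ha : a = j
        · subst ha
          rw [Function.update_self]
          exact Finset.mem_filter.mpr ⟨hg a, hgj⟩
        · rw [Function.update_of_ne ha]; exact hg a
      · intro hg
        constructor
        · intro a
          have := hg a
          by_cases ha : a = j
          · subst ha
            rw [Function.update_self] at this
            exact (Finset.mem_filter.mp this).1
          · rwa [Function.update_of_ne ha] at this
        · have := hg j
          rw [Function.update_self] at this
          exact (Finset.mem_filter.mp this).2
    rw [hfilter, ← Finset.prod_univ_sum T (fun j' i' => K i' j')]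
    rw [Finset.prod_eq_single j ?_ (fun h => absurd (Finset.mem_univ j) h)]
    · rw [hT, Function.update_self, Finset.filter_eq' (S j) i]
      by_cases hi : i ∈ S j
      · rw [if_pos hi, Finset.sum_singleton]
      · rw [if_neg hi, Finset.sum_empty]
        refine (hKsupp i j ?_)
        rcases hA01 i j with h | h
        · exact h
        · exact absurd (Finset.mem_filter.mpr ⟨Finset.mem_univ i, h⟩) hi
    · intro b _ hb
      rw [hT, Function.update_of_ne hb]
      exact hSsum b
end

section
/- On a directed cycle graph with self-loops on N ≥ 2 nodes, if the defender state x_{t+1} satisfies the guarding condition [x_{t+1}]_i ≥ [y_t]_i + [y_t]_{i-1} for all i (indices mod N), and the attacker moves amounts 0 ≤ [ŷ_t]_i ≤ [y_t]_i from node i to node i+1 so that [y_{t+1}]_i = [y_t]_i − [ŷ_t]_i + [ŷ_t]_{i-1}, then the defender move sending [x̂_{t+1}]_i = [ŷ_t]_i + [ŷ_t]_{i-1} from node i to node i+1 is feasible (i.e., [x̂_{t+1}]_i ≤ [x_{t+1}]_i) and the resulting state [x_{t+2}]_i = [x_{t+1}]_i − [x̂_{t+1}]_i + [x̂_{t+1}]_{i-1}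 again satisfies the guarding condition [x_{t+2}]_i ≥ [y_{t+1}]_i + [y_{t+1}]_{i-1} for all i. -/
open Finset

theorem stmt12 {N : ℕ} (hN : 2 ≤ N)
    (x1 yt yhat : ZMod N → ℝ)
    (hyt : ∀ i, 0 ≤ yt i)
    (hyhat : ∀ i, 0 ≤ yhat i ∧ yhat i ≤ yt i)
    (hguard : ∀ i, yt i + yt (i - 1) ≤ x1 i) :
    (∀ i, yhat i + yhat (i - 1) ≤ x1 i) ∧
    ∀ i, (yt i - yhat i + yhat (i - 1)) + (yt (i - 1) - yhat (i - 1) + yhat (i - 1 - 1))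
        ≤ x1 i - (yhat i + yhat (i - 1)) + (yhat (i - 1) + yhat (i - 1 - 1)) := by
  constructor
  · intro i
    have := hguard i; have := (hyhat i).2; have := (hyhat (i-1)).2
    linarith
  · intro i
    have := hguard i
    linarith
end

section
/- On a directed cycle graph with self-loops where the defender has resource X ≥ 2Y, if the defender can guard at time 1 (its safe set is nonempty given initial states x_0, y_0), then by induction the defender can guard indefinitely: for every finite horizon T there exist admissible defender states x_1,…,x_T with x_{t+1} reachable from x_t and x_{t+1} defending against all attacker reachable states at time t+1. -/
open Finset

/-- Adjacency matrix of the directed cycle with self-loops on `ZMod N`: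
node `j` has out-edges to `j` and `j+1`. -/
def cycA (N : ℕ) [NeZero N] : Matrix (ZMod N) (ZMod N) ℝ :=
  fun i j => if i = j ∨ i = j + 1 then 1 else 0

section Aux

variable {N : ℕ} [NeZero N]

lemma cyc_ne (hN : 2 ≤ N) (j : ZMod N) : j ≠ j + 1 := by
  haveI : Fact (1 < N) := ⟨hN⟩
  intro h
  rw [left_eq_add] at h
  exact one_ne_zero h

lemma two_sum (hN : 2 ≤ N) (g : ZMod N → ℝ) (j : ZMod N)
    (h : ∀ i, i ≠ j → i ≠ j + 1 → g i = 0) :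
    ∑ i, g i = g j + g (j + 1) := by
  rw [← Finset.sum_pair (cyc_ne hN j)]
  symm
  apply Finset.sum_subset (Finset.subset_univ _)
  intro i _ hi
  simp only [Finset.mem_insert, Finset.mem_singleton] at hi
  push_neg at hi
  exact h i hi.1 hi.2

lemma mulVec_cyc (hN : 2 ≤ N) {F : Matrix (ZMod N) (ZMod N) ℝ}
    (hsupp : ∀ i j, cycA N i j = 0 → F i j = 0) (u : ZMod N → ℝ) (i : ZMod N) :
    F.mulVec u i = F i (i - 1) * u (i - 1) + F i i * u i := by
  have hsub : i - 1 + 1 = i := by ring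
  have := two_sum hN (fun j => F i j * u j) (i - 1) ?_
  · simpa [Matrix.mulVec, dotProduct, hsub] using this
  · intro k h1 h2
    rw [hsub] at h2
    have hk : F i k = 0 := by
      apply hsupp
      unfold cycA
      rw [if_neg]
      rintro (h | h)
      · exact h2 h.symm
      · exact h1 (by rw [h]; ring)
    simp [hk]

lemma colsum_cyc (hN : 2 ≤ N) {F : Matrix (ZMod N) (ZMod N) ℝ}
    (hF : IsStoch (cycA N) F) (j : ZMod N) :
    F j j + F (j + 1) j = 1 := by
  rw [← hF.2.1 j]
  symm
  apply two_sum hN (fun i => F i j) j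
  intro i h1 h2
  apply hF.2.2
  unfold cycA
  rw [if_neg]
  rintro (h | h)
  · exact h1 h
  · exact h2 h

end Aux

theorem stmt13 {N : ℕ} [NeZero N] (hN : 2 ≤ N) (X Y : ℝ)
    (hXY : 2 * Y ≤ X)
    (x0 : ZMod N → ℝ) (y : ℕ → ZMod N → ℝ)
    (hx0 : ∀ i, 0 ≤ x0 i) (hx0sum : ∑ i, x0 i = X)
    (hy0 : ∀ i, 0 ≤ y 0 i) (hy0sum : ∑ i, y 0 i = Y)
    (hyreach : ∀ t, ∃ F, IsStoch (cycA N) F ∧ y (t + 1) = F.mulVec (y t))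
    (hsafe : ∃ x1, (∃ K, IsStoch (cycA N) K ∧ x1 = K.mulVec x0) ∧
        ∀ i, y 0 i + y 0 (i - 1) ≤ x1 i) :
    ∀ T : ℕ, ∃ x : ℕ → ZMod N → ℝ, x 0 = x0 ∧
      ∀ t < T, (∃ K, IsStoch (cycA N) K ∧ x (t + 1) = K.mulVec (x t)) ∧
        ∀ i, y t i + y t (i - 1) ≤ x (t + 1) i := by
  -- nonnegativity of attacker states at all times
  have hynn : ∀ t i, 0 ≤ y t i := by
    intro t
    induction t with
    | zero => exact hy0
    | succ t ih =>
      obtain ⟨F, hF, hyF⟩ := hyreach t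
      intro i
      rw [hyF]
      exact Finset.sum_nonneg fun j _ => mul_nonneg (hF.1 i j) (ih j)
  obtain ⟨x1, ⟨K0, hK0, hx1⟩, hguard0⟩ := hsafe
  -- requirement vector
  set v : ℕ → ZMod N → ℝ := fun t i => y t i + y t (i - 1) with hv
  have hvnn : ∀ t i, 0 ≤ v t i := fun t i => add_nonneg (hynn t i) (hynn t _)
  -- slack
  set s : ZMod N → ℝ := fun i => x1 i - v 0 i with hsdef
  have hsnn : ∀ i, 0 ≤ s i := fun i => sub_nonneg.2 (hguard0 i)
  -- defender trajectory
  set x : ℕ → ZMod N → ℝ := fun t => if t = 0 then x0 else fun i => s i + v (t - 1) i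
    with hxdef
  have hxval : ∀ t, x (t + 1) = fun i => s i + v t i := by
    intro t; simp [hxdef]
  intro T
  refine ⟨x, by simp [hxdef], ?_⟩
  intro t _
  constructor
  · -- reachability
    cases t with
    | zero =>
      refine ⟨K0, hK0, ?_⟩
      have : x 1 = x1 := by
        rw [hxval 0]; funext i; simp [hsdef]
      rw [this]
      have h0 : x 0 = x0 := by simp [hxdef]
      rw [h0]; exact hx1
    | succ t =>
      obtain ⟨F, hF, hyF⟩ := hyreach t
      set b : ZMod N → ℝ := fun j => F (j + 1) j with hbdef
      set u : ZMod N → ℝ := fun j => y t j with hudef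
      have hb0 : ∀ j, 0 ≤ b j := fun j => hF.1 _ _
      have hcol : ∀ j, F j j = 1 - b j := by
        intro j
        have := colsum_cyc hN hF j
        linarith
      have hb1 : ∀ j, b j ≤ 1 := by
        intro j
        have h1 := hF.1 j j
        rw [hcol j] at h1
        linarith
      have hFb : ∀ k : ZMod N, F k (k - 1) = b (k - 1) := by
        intro k
        have hsub : k - 1 + 1 = k := by ring
        show F k (k - 1) = F (k - 1 + 1) (k - 1)
        rw [hsub]
      -- the flow
      set f : ZMod N → ℝ := fun j => b j * u j + b (j - 1) * u (j - 1) with hfdef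
      have hunn : ∀ j, 0 ≤ u j := fun j => hynn t j
      have hf0 : ∀ j, 0 ≤ f j :=
        fun j => add_nonneg (mul_nonneg (hb0 j) (hunn j)) (mul_nonneg (hb0 _) (hunn _))
      have hfv : ∀ j, f j ≤ v t j := by
        intro j
        have h1 : b j * u j ≤ u j := mul_le_of_le_one_left (hunn j) (hb1 j)
        have h2 : b (j - 1) * u (j - 1) ≤ u (j - 1) :=
          mul_le_of_le_one_left (hunn _) (hb1 _)
        simp only [hv, hudef] at *
        exact add_le_add h1 h2
      set xt : ZMod N → ℝ := fun i => s i + v t i with hxtdef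
      have hfxt : ∀ j, f j ≤ xt j := fun j =>
        (hfv j).trans (le_add_of_nonneg_left (hsnn j))
      have hxtnn : ∀ j, 0 ≤ xt j := fun j => add_nonneg (hsnn j) (hvnn t j)
      set c : ZMod N → ℝ := fun j => if xt j = 0 then 0 else f j / xt j with hcdef
      have hcx : ∀ j, c j * xt j = f j := by
        intro j
        by_cases h : xt j = 0
        · have hfz : f j = 0 := le_antisymm (h ▸ hfxt j) (hf0 j)
          simp [hcdef, h, hfz]
        · simp [hcdef, h, div_mul_cancel₀ _ h]
      have hc0 : ∀ j, 0 ≤ c j := by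
        intro j
        by_cases h : xt j = 0
        · simp [hcdef, h]
        · simp only [hcdef, if_neg h]
          exact div_nonneg (hf0 j) (hxtnn j)
      have hc1 : ∀ j, c j ≤ 1 := by
        intro j
        by_cases h : xt j = 0
        · simp [hcdef, h]
        · simp only [hcdef, if_neg h]
          rw [div_le_one (lt_of_le_of_ne (hxtnn j) (Ne.symm h))]
          exact hfxt j
      set K : Matrix (ZMod N) (ZMod N) ℝ :=
        fun i j => if i = j then 1 - c j else if i = j + 1 then c j else 0 with hKdef
      have hKsupp : ∀ i j, cycA N i j = 0 → K i j = 0 := by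
        intro i j h
        unfold cycA at h
        by_cases h' : i = j ∨ i = j + 1
        · rw [if_pos h'] at h; norm_num at h
        · push_neg at h'
          simp [hKdef, h'.1, h'.2]
      have hKstoch : IsStoch (cycA N) K := by
        refine ⟨?_, ?_, hKsupp⟩
        · intro i j
          simp only [hKdef]
          split
          · linarith [hc1 j]
          · split
            · exact hc0 j
            · exact le_rfl
        · intro j
          rw [two_sum hN (fun i => K i j) j]
          · have h1 : K j j = 1 - c j := by simp [hKdef]
            have h2 : K (j + 1) j = c j := by
              simp [hKdef, (cyc_ne hN j).symm]
            rw [h1, h2]; ring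
          · intro i h1 h2
            simp [hKdef, h1, h2]
      refine ⟨K, hKstoch, ?_⟩
      funext i
      rw [mulVec_cyc hN hKsupp]
      have hsub : i - 1 + 1 = i := by ring
      have hK1 : K i (i - 1) = c (i - 1) := by
        have hne' := cyc_ne hN (i - 1)
        rw [hsub] at hne'
        have hne : ¬ i = i - 1 := fun h => hne' h.symm
        simp [hKdef, hne, hsub]
      have hK2 : K i i = 1 - c i := by simp [hKdef]
      have hxa : x (t + 1) = xt := hxval t
      rw [hxa, hK1, hK2, hcx (i - 1), sub_mul, one_mul, hcx i, hxval (t + 1)]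
      -- unfold everything and compute
      have hy1 : ∀ k : ZMod N, y (t + 1) k = b (k - 1) * u (k - 1) + (1 - b k) * u k := by
        intro k
        rw [hyF, mulVec_cyc hN hF.2.2, hFb, hcol]
      simp only [Nat.add_sub_cancel, hv, hy1, hxtdef, hfdef]
      ring
  · -- guarding
    intro i
    rw [hxval t]
    exact le_add_of_nonneg_left (hsnn i)
end

section
/- If there is a node with a self-loop and the graph is strongly connected, then from any initial attacker state the attacker can reach, in finitely many admissible moves, the state with all its resource Y concentrated at any prescribed node i*. -/
/-
Let `c` carry a self-loop. Sending every node to its next node on a shortest path to `c` (and `c` to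
itself) defines a map `g` along the edges of `G` whose iterates eventually send every node to `c`.
The `0/1` matrix of `g` is admissible, so after finitely many moves all of `Y` sits at `c`. A point
mass can then be pushed along any single edge (redirect one column of the matrix of `g`), hence
along a path from `c` to `i*`.
-/

open Finset

open scoped Matrix

namespace Relation

variable {α : Type*} {r : α → α → Prop}

theorem ReflTransGen.exists_iterate_comp {a b : α} (h : ReflTransGen r a b) :
    ∃ n, (Comp r)^[n] (· = ·) a b := by
  induction h using ReflTransGen.head_induction_on with
  | refl => exact ⟨0, rfl⟩
  | head hac _ ih =>
    obtain ⟨n, hn⟩ := ih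
    exact ⟨n + 1, by rw [Function.iterate_succ_apply']; exact ⟨_, hac, hn⟩⟩

theorem ReflTransGen.exists_trajectory {a b : α} (h : ReflTransGen r a b) :
    ∃ τ, ∃ x : ℕ → α, x 0 = a ∧ (∀ t < τ, r (x t) (x (t + 1))) ∧ x τ = b := by
  induction h with
  | refl => exact ⟨0, fun _ => a, rfl, by omega, rfl⟩
  | @tail b c _ hbc ih =>
    obtain ⟨τ, x, hx0, hstep, hxτ⟩ := ih
    refine ⟨τ + 1, fun t => if t ≤ τ then x t else c, by simpa using hx0, fun t ht => ?_, by simp⟩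
    rcases Nat.lt_succ_iff_lt_or_eq.mp ht with ht | rfl
    · simpa [ht.le, Nat.succ_le_of_lt ht] using hstep t ht
    · simpa [hxτ] using hbc

theorem exists_iterate_eq_of_forall_reflTransGen [Finite α] {c : α} (hc : r c c)
    (h : ∀ a, ReflTransGen r a c) : ∃ g : α → α, (∀ a, r a (g a)) ∧ ∃ T, ∀ a, g^[T] a = c := by
  classical
  have hdist : ∀ a, ∃ n, (Comp r)^[n] (· = ·) a c := fun a => (h a).exists_iterate_comp
  let d a := Nat.find (hdist a)
  have hd_zero {a} (ha : d a = 0) : a = c := by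
    have hc := Nat.find_spec (hdist a)
    rwa [show Nat.find (hdist a) = 0 from ha] at hc
  have closer : ∀ a, ∃ b, r a b ∧ d b ≤ d a - 1 := by
    intro a
    rcases hda : d a with _ | n
    · exact ⟨c, hd_zero hda ▸ hc, by simp [d]⟩
    · have hn := Nat.find_spec (hdist a)
      rw [show Nat.find (hdist a) = n + 1 from hda, Function.iterate_succ_apply'] at hn
      obtain ⟨b, hab, hb⟩ := hn
      exact ⟨b, hab, Nat.find_le hb⟩
  choose g hg hgd using closer
  have iterate_eq : ∀ n a, d a ≤ n → g^[n] a = c := by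
    intro n
    induction n with
    | zero => exact fun a ha => hd_zero (Nat.le_zero.mp ha)
    | succ n ih => exact fun a ha => ih (g a) (by have := hgd a; omega)
  obtain ⟨T, hT⟩ := Finite.bddAbove_range d
  exact ⟨g, hg, T, fun a => iterate_eq T a (hT ⟨a, rfl⟩)⟩

end Relation

section PushforwardMatrix

variable {ι R : Type*} [Fintype ι] [DecidableEq ι] [Semiring R]

def pushforwardMatrix (g : ι → ι) : Matrix ι ι R :=
  Matrix.of fun i j => if i = g j then 1 else 0

theorem pushforwardMatrix_mul (g h : ι → ι) :
    (pushforwardMatrix g * pushforwardMatrix h : Matrix ι ι R) = pushforwardMatrix (g ∘ h) := by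
  ext i j
  simp [pushforwardMatrix, Matrix.mul_apply]

theorem pushforwardMatrix_pow (g : ι → ι) (n : ℕ) :
    (pushforwardMatrix g : Matrix ι ι R) ^ n = pushforwardMatrix g^[n] := by
  induction n with
  | zero => ext i j; simp only [pushforwardMatrix]; congr
  | succ n ih => rw [pow_succ', ih, pushforwardMatrix_mul, Function.iterate_succ']

theorem pushforwardMatrix_mulVec_single (g : ι → ι) (j : ι) (x : R) :
    pushforwardMatrix g *ᵥ Pi.single j x = Pi.single (g j) x := by
  ext i
  simp [pushforwardMatrix, Matrix.mulVec, dotProduct, Pi.single_apply]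

theorem pushforwardMatrix_const_mulVec (c : ι) (y : ι → R) :
    pushforwardMatrix (fun _ => c) *ᵥ y = Pi.single c (∑ j, y j) := by
  ext i
  by_cases hi : i = c <;> simp [pushforwardMatrix, Matrix.mulVec, dotProduct, hi]

theorem isStoch_pushforwardMatrix {A : Matrix ι ι ℝ} {g : ι → ι} (hg : ∀ j, A (g j) j ≠ 0) :
    IsStoch A (pushforwardMatrix g) := by
  refine ⟨fun i j => ?_, fun j => by simp [pushforwardMatrix], fun i j hA => ?_⟩
  · simp only [pushforwardMatrix, Matrix.of_apply]; split_ifs <;> simp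
  · have : i ≠ g j := by rintro rfl; exact hg j hA
    simp [pushforwardMatrix, this]

end PushforwardMatrix

section AdmissibleMove

variable {ι : Type*} [Fintype ι] [DecidableEq ι] {A : Matrix ι ι ℝ}

def AdmissibleMove (A : Matrix ι ι ℝ) (y z : ι → ℝ) : Prop :=
  ∃ F, IsStoch A F ∧ z = F *ᵥ y

theorem reflTransGen_admissibleMove_pow_mulVec {F : Matrix ι ι ℝ} (hF : IsStoch A F)
    (n : ℕ) (y : ι → ℝ) : Relation.ReflTransGen (AdmissibleMove A) y ((F ^ n) *ᵥ y) := by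
  induction n with
  | zero => simpa using Relation.ReflTransGen.refl
  | succ n ih =>
    refine ih.tail ⟨F, hF, ?_⟩
    rw [pow_succ', ← Matrix.mulVec_mulVec]

theorem reflTransGen_admissibleMove_gather {g : ι → ι} {c : ι} {T : ℕ}
    (hg : ∀ j, A (g j) j ≠ 0) (hT : ∀ j, g^[T] j = c) (y : ι → ℝ) :
    Relation.ReflTransGen (AdmissibleMove A) y (Pi.single c (∑ j, y j)) := by
  have hpow : (pushforwardMatrix g : Matrix ι ι ℝ) ^ T = pushforwardMatrix fun _ => c := by
    rw [pushforwardMatrix_pow]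
    exact congrArg pushforwardMatrix (funext hT)
  rw [← pushforwardMatrix_const_mulVec, ← hpow]
  exact reflTransGen_admissibleMove_pow_mulVec (isStoch_pushforwardMatrix hg) T y

theorem admissibleMove_single {g : ι → ι} (hg : ∀ j, A (g j) j ≠ 0) {i i' : ι}
    (hii' : A i' i ≠ 0) (x : ℝ) : AdmissibleMove A (Pi.single i x) (Pi.single i' x) := by
  have hg' : ∀ j, A (Function.update g i i' j) j ≠ 0 := by
    intro j
    by_cases hj : j = i
    · subst hj; simpa using hii'
    · simpa [hj] using hg j
  refine ⟨_, isStoch_pushforwardMatrix hg', ?_⟩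
  rw [pushforwardMatrix_mulVec_single, Function.update_self]

theorem reflTransGen_admissibleMove_single {g : ι → ι} (hg : ∀ j, A (g j) j ≠ 0) {i i' : ι}
    (hpath : Relation.ReflTransGen (fun a b => A b a ≠ 0) i i') (x : ℝ) :
    Relation.ReflTransGen (AdmissibleMove A) (Pi.single i x) (Pi.single i' x) :=
  hpath.lift (fun i => Pi.single i x) fun _ _ h => admissibleMove_single hg h x

end AdmissibleMove

theorem stmt15_general {N : ℕ} (A : Matrix (Fin N) (Fin N) ℝ)
    (hsc : ∀ i j : Fin N, Relation.ReflTransGen (fun a b => A b a = 1) i j)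
    (hloop : ∃ i, A i i = 1)
    (Y : ℝ) (y0 : Fin N → ℝ)
    (hsum : ∑ i, y0 i = Y)
    (istar : Fin N) :
    ∃ τ : ℕ, ∃ y : ℕ → Fin N → ℝ, y 0 = y0 ∧
      (∀ t < τ, ∃ F, IsStoch A F ∧ y (t + 1) = F.mulVec (y t)) ∧
      y τ = Pi.single istar Y := by
  obtain ⟨c, hc⟩ := hloop
  have hne : ∀ a b, A b a = 1 → A b a ≠ 0 := fun _ _ h => by simp [h]
  obtain ⟨g, hg, T, hT⟩ := Relation.exists_iterate_eq_of_forall_reflTransGen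
    (r := fun a b => A b a = 1) hc (hsc · c)
  have hg' : ∀ j, A (g j) j ≠ 0 := fun j => hne _ _ (hg j)
  have gather := reflTransGen_admissibleMove_gather hg' hT y0
  have walk := reflTransGen_admissibleMove_single hg'
    (Relation.ReflTransGen.mono hne _ _ (hsc c istar)) Y
  rw [hsum] at gather
  exact (gather.trans walk).exists_trajectory

theorem stmt15 {N : ℕ} (A : Matrix (Fin N) (Fin N) ℝ)
    (hA01 : ∀ i j, A i j = 0 ∨ A i j = 1)
    (hsc : ∀ i j : Fin N, Relation.ReflTransGen (fun a b => A b a = 1) i j)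
    (hloop : ∃ i, A i i = 1)
    (Y : ℝ) (hY : 0 ≤ Y) (y0 : Fin N → ℝ)
    (hy0 : ∀ i, 0 ≤ y0 i) (hsum : ∑ i, y0 i = Y)
    (istar : Fin N) :
    ∃ τ : ℕ, ∃ y : ℕ → Fin N → ℝ, y 0 = y0 ∧
      (∀ t < τ, ∃ F, IsStoch A F ∧ y (t + 1) = F.mulVec (y t)) ∧
      y τ = Pi.single istar Y :=
  stmt15_general A hsc hloop Y y0 hsum istar
end

section
/- Degenerate attacker winning condition: if G is strongly connected, has a node with a self-loop, and X < d⁺_max · Y, then the attacker can, in finitely many moves from any initial state, reach a state y* (all mass at a node of maximum out-degree) with X^req(y*) = d⁺_max · Y > X, so that no defender state x with ∑_i x_i = X can satisfy x_i ≥ max_{F}[Fy*]_i for all i. -/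
open Finset

/-! The attacker wins by routing deterministically. Since `G` is strongly connected and has a
self-loop at `L`, there is a map `f` choosing one out-neighbour of every node such that some
iterate `f^[T]` is constant `L`: move each node one step closer to `L`, and keep `L` on its loop.
Routing all mass along `f` for `T` steps gathers it at `L`; it is then carried as a point mass
along a path to a node `jmax` of maximal out-degree. Against `Y` units at `jmax` the attacker may
send the whole mass to any out-neighbour, so a defender must put at least `Y` on each of them,
which costs `d⁺_max · Y > X`. -/

namespace Relation.ReflTransGen

variable {α : Type*} {r : α → α → Prop}

theorem exists_seq {a b : α} (h : ReflTransGen r a b) :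
    ∃ n, ∃ g : ℕ → α, g 0 = a ∧ (∀ k < n, r (g k) (g (k + 1))) ∧ g n = b := by
  induction h using head_induction_on with
  | refl => exact ⟨0, fun _ => b, rfl, by simp, rfl⟩
  | head hac _ ih =>
    obtain ⟨n, g, rfl, hg, rfl⟩ := ih
    refine ⟨n + 1, fun | 0 => _ | k + 1 => g k, rfl, ?_, rfl⟩
    rintro (_ | k) hk
    exacts [hac, hg k (by omega)]

theorem exists_successor_iterate_eq {L : α} (h : ∀ a, ReflTransGen r a L) (hL : r L L) :
    ∃ f : α → α, (∀ a, r a (f a)) ∧ f L = L ∧ ∀ a, ∃ n, f^[n] a = L := by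
  classical
  have hwalk (a : α) := (h a).exists_seq
  let d (a : α) : ℕ := Nat.find (hwalk a)
  have hcloser (a : α) (ha : a ≠ L) : ∃ c, r a c ∧ d c < d a := by
    obtain ⟨g, hg0, hg, hgL⟩ : ∃ g : ℕ → α,
        g 0 = a ∧ (∀ k < d a, r (g k) (g (k + 1))) ∧ g (d a) = L :=
      Nat.find_spec (hwalk a)
    obtain ⟨n, hn⟩ : ∃ n, d a = n + 1 :=
      Nat.exists_eq_succ_of_ne_zero fun h0 => ha (by rw [← hg0, ← hgL, h0])
    rw [hn] at hg hgL ⊢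
    refine ⟨g 1, hg0 ▸ hg 0 n.succ_pos, Nat.lt_succ_of_le (Nat.find_le ?_)⟩
    exact ⟨fun k => g (k + 1), rfl, fun k hk => hg (k + 1) (by omega), hgL⟩
  choose! g hgr hgd using hcloser
  refine ⟨fun a => if a = L then L else g a, fun a => ?_, if_pos rfl, fun a => ?_⟩
  · by_cases ha : a = L
    · simpa [ha] using hL
    · simpa [ha] using hgr a ha
  · induction hd : d a using Nat.strong_induction_on generalizing a with
    | _ k ih =>
      by_cases ha : a = L
      · exact ⟨0, ha⟩
      · obtain ⟨n, hn⟩ := ih _ (hd ▸ hgd a ha) (g a) rfl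
        exact ⟨n + 1, by simpa [ha] using hn⟩

end Relation.ReflTransGen

theorem Function.exists_iterate_eq_const {α : Type*} [Finite α] {f : α → α} {L : α}
    (hL : f L = L) (h : ∀ a, ∃ n, f^[n] a = L) : ∃ T, ∀ a, f^[T] a = L := by
  cases nonempty_fintype α
  choose n hn using h
  refine ⟨univ.sup n, fun a => ?_⟩
  rw [← Nat.sub_add_cancel (le_sup (mem_univ a)), Function.iterate_add_apply, hn,
    Function.iterate_fixed hL]

theorem sum_mul_le_sum_of_zero_or_one {ι : Type*} [Fintype ι] {w x : ι → ℝ} {c : ℝ}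
    (hw : ∀ i, w i = 0 ∨ w i = 1) (hx : ∀ i, 0 ≤ x i) (hc : ∀ i, w i ≠ 0 → c ≤ x i) : (∑ i, w i) * c ≤ ∑ i, x i := by
  rw [sum_mul]
  refine sum_le_sum fun i _ => ?_
  rcases hw i with h | h
  · simpa [h] using hx i
  · simpa [h] using hc i (by simp [h])

open Matrix

variable {ι : Type*} [DecidableEq ι]

def routingMatrix (f : ι → ι) : Matrix ι ι ℝ :=
  of fun i j => if f j = i then 1 else 0

theorem routingMatrix_id : routingMatrix (id : ι → ι) = 1 := by
  ext i j
  simp [routingMatrix, one_apply, eq_comm]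

variable [Fintype ι]

theorem routingMatrix_comp (f g : ι → ι) :
    routingMatrix (f ∘ g) = routingMatrix f * routingMatrix g := by
  ext i k
  simp [routingMatrix, mul_apply]

theorem routingMatrix_const_mulVec (c : ι) (y : ι → ℝ) :
    routingMatrix (fun _ => c) *ᵥ y = Pi.single c (∑ j, y j) := by
  ext i
  simp [routingMatrix, mulVec, dotProduct, Pi.single_apply, eq_comm]

theorem routingMatrix_mulVec_single (f : ι → ι) (j : ι) (c : ℝ) :
    routingMatrix f *ᵥ Pi.single j c = Pi.single (f j) c := by
  ext i
  simp [routingMatrix, mulVec, dotProduct, Pi.single_apply, eq_comm]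

theorem isStoch_routingMatrix {A : Matrix ι ι ℝ} {f : ι → ι} (hf : ∀ j, A (f j) j ≠ 0) :
    IsStoch A (routingMatrix f) := by
  refine ⟨fun i j => ?_, fun j => by simp [routingMatrix], fun i j hA => ?_⟩
  · simp only [routingMatrix, of_apply]; positivity
  · simp only [routingMatrix, of_apply, ite_eq_right_iff, one_ne_zero, imp_false]
    rintro rfl
    exact hf j hA

theorem exists_isStoch_mulVec_single {A : Matrix ι ι ℝ} {f : ι → ι} (hf : ∀ j, A (f j) j ≠ 0)
    {a b : ι} (hab : A b a ≠ 0) (c : ℝ) :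
    ∃ F, IsStoch A F ∧ F *ᵥ Pi.single a c = Pi.single b c := by
  refine ⟨routingMatrix (Function.update f a b), isStoch_routingMatrix fun j => ?_, ?_⟩
  · by_cases hj : j = a
    · subst hj; simpa using hab
    · simpa [hj] using hf j
  · rw [routingMatrix_mulVec_single, Function.update_self]

def AttackerMove (A : Matrix ι ι ℝ) (y y' : ι → ℝ) : Prop :=
  ∃ F, IsStoch A F ∧ y' = F *ᵥ y

theorem reflTransGen_attackerMove_iterate {A : Matrix ι ι ℝ} {f : ι → ι}
    (hf : ∀ j, A (f j) j ≠ 0) (y : ι → ℝ) (n : ℕ) :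
    Relation.ReflTransGen (AttackerMove A) y (routingMatrix f^[n] *ᵥ y) := by
  induction n with
  | zero =>
    rw [Function.iterate_zero, routingMatrix_id, one_mulVec]
  | succ n ih =>
    refine ih.tail ⟨routingMatrix f, isStoch_routingMatrix hf, ?_⟩
    rw [Function.iterate_succ', routingMatrix_comp, mulVec_mulVec]

theorem reflTransGen_attackerMove_gather {A : Matrix ι ι ℝ} {f : ι → ι} {L : ι} {T : ℕ}
    (hf : ∀ j, A (f j) j ≠ 0) (hT : ∀ a, f^[T] a = L) (y : ι → ℝ) :
    Relation.ReflTransGen (AttackerMove A) y (Pi.single L (∑ j, y j)) := by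
  have hconst : f^[T] = fun _ => L := funext hT
  simpa [hconst, routingMatrix_const_mulVec] using reflTransGen_attackerMove_iterate hf y T

theorem exists_lt_mulVec_single {A : Matrix ι ι ℝ} {f : ι → ι} (hf : ∀ j, A (f j) j ≠ 0)
    {j : ι} (hA01 : ∀ i, A i j = 0 ∨ A i j = 1) {x : ι → ℝ} (hx : ∀ i, 0 ≤ x i) {Y : ℝ}
    (hxY : ∑ i, x i < (∑ i, A i j) * Y) :
    ∃ i, ∃ F, IsStoch A F ∧ x i < (F *ᵥ Pi.single j Y) i := by
  by_contra! hcover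
  refine hxY.not_ge (sum_mul_le_sum_of_zero_or_one hA01 hx fun i hi => ?_)
  obtain ⟨F, hF, hFj⟩ := exists_isStoch_mulVec_single hf hi Y
  simpa [hFj] using hcover i F hF

theorem stmt16_general {N : ℕ} (hN : 0 < N) (A : Matrix (Fin N) (Fin N) ℝ)
    (hA01 : ∀ i j, A i j = 0 ∨ A i j = 1)
    (hsc : ∀ i j : Fin N, Relation.ReflTransGen (fun a b => A b a = 1) i j)
    (hloop : ∃ i, A i i = 1)
    (X Y : ℝ)
    (hXY : X < (Finset.univ.sup' (Finset.univ_nonempty_iff.mpr (Fin.pos_iff_nonempty.mp hN))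
        (fun j => ∑ i, A i j)) * Y)
    (y0 : Fin N → ℝ) (hsum : ∑ i, y0 i = Y) :
    ∃ jmax : Fin N,
      (∑ i, A i jmax) =
        (Finset.univ.sup' (Finset.univ_nonempty_iff.mpr (Fin.pos_iff_nonempty.mp hN))
          (fun j => ∑ i, A i j)) ∧
      (∃ τ : ℕ, ∃ y : ℕ → Fin N → ℝ, y 0 = y0 ∧
        (∀ t < τ, ∃ F, IsStoch A F ∧ y (t + 1) = F.mulVec (y t)) ∧
        y τ = Pi.single jmax Y) ∧
      (∑ j, (∑ i, A i j) * (Pi.single jmax Y : Fin N → ℝ) j =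
        (Finset.univ.sup' (Finset.univ_nonempty_iff.mpr (Fin.pos_iff_nonempty.mp hN))
          (fun j => ∑ i, A i j)) * Y) ∧
      X < (Finset.univ.sup' (Finset.univ_nonempty_iff.mpr (Fin.pos_iff_nonempty.mp hN))
          (fun j => ∑ i, A i j)) * Y ∧
      ∀ x : Fin N → ℝ, (∀ i, 0 ≤ x i) → ∑ i, x i = X →
        ∃ i, ∃ F, IsStoch A F ∧ x i < F.mulVec (Pi.single jmax Y) i := by
  obtain ⟨jmax, -, hjmax⟩ := exists_mem_eq_sup' _ fun j => ∑ i, A i j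
  obtain ⟨L, hL⟩ := hloop
  obtain ⟨f, hfA, hfL, hflow⟩ := Relation.ReflTransGen.exists_successor_iterate_eq (hsc · L) hL
  obtain ⟨T, hT⟩ := Function.exists_iterate_eq_const hfL hflow
  have hf : ∀ j, A (f j) j ≠ 0 := fun j => ne_of_eq_of_ne (hfA j) one_ne_zero
  have hcarry : Relation.ReflTransGen (AttackerMove A) (Pi.single L Y) (Pi.single jmax Y) :=
    (hsc L jmax).lift (Pi.single · Y) fun a b hab => by
      obtain ⟨F, hF, hFa⟩ := exists_isStoch_mulVec_single hf (ne_of_eq_of_ne hab one_ne_zero) Y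
      exact ⟨F, hF, hFa.symm⟩
  refine ⟨jmax, hjmax.symm,
    (hsum ▸ reflTransGen_attackerMove_gather hf hT y0 |>.trans hcarry).exists_seq,
    by rw [hjmax]; exact dotProduct_single _ _ _, hXY, fun x hx hxX => ?_⟩
  exact exists_lt_mulVec_single hf (hA01 · jmax) hx (by rwa [hxX, ← hjmax])

theorem stmt16 {N : ℕ} (hN : 0 < N) (A : Matrix (Fin N) (Fin N) ℝ)
    (hA01 : ∀ i j, A i j = 0 ∨ A i j = 1)
    (hcol : ∀ j, 1 ≤ ∑ i, A i j)
    (hsc : ∀ i j : Fin N, Relation.ReflTransGen (fun a b => A b a = 1) i j)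
    (hloop : ∃ i, A i i = 1)
    (X Y : ℝ) (hY : 0 < Y)
    (hXY : X < (Finset.univ.sup' (Finset.univ_nonempty_iff.mpr (Fin.pos_iff_nonempty.mp hN))
        (fun j => ∑ i, A i j)) * Y)
    (y0 : Fin N → ℝ) (hy0 : ∀ i, 0 ≤ y0 i) (hsum : ∑ i, y0 i = Y) :
    ∃ jmax : Fin N,
      (∑ i, A i jmax) =
        (Finset.univ.sup' (Finset.univ_nonempty_iff.mpr (Fin.pos_iff_nonempty.mp hN))
          (fun j => ∑ i, A i j)) ∧
      (∃ τ : ℕ, ∃ y : ℕ → Fin N → ℝ, y 0 = y0 ∧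
        (∀ t < τ, ∃ F, IsStoch A F ∧ y (t + 1) = F.mulVec (y t)) ∧
        y τ = Pi.single jmax Y) ∧
      (∑ j, (∑ i, A i j) * (Pi.single jmax Y : Fin N → ℝ) j =
        (Finset.univ.sup' (Finset.univ_nonempty_iff.mpr (Fin.pos_iff_nonempty.mp hN))
          (fun j => ∑ i, A i j)) * Y) ∧
      X < (Finset.univ.sup' (Finset.univ_nonempty_iff.mpr (Fin.pos_iff_nonempty.mp hN))
          (fun j => ∑ i, A i j)) * Y ∧
      ∀ x : Fin N → ℝ, (∀ i, 0 ≤ x i) → ∑ i, x i = X →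
        ∃ i, ∃ F, IsStoch A F ∧ x i < F.mulVec (Pi.single jmax Y) i :=
  stmt16_general hN A hA01 hsc hloop X Y hXY y0 hsum
end

section
/- For a polytope D = convexhull{x^(1),…,x^(m)} of states, the one-step reachable set R(D) = {Kx : K ∈ 𝒦, x ∈ D} equals the convex hull of the finitely many points {K̂^(ℓ) x^(s)} over all extreme actions K̂^(ℓ) ∈ 𝒦̂ and vertices x^(s). -/
open Finset

/-!
A column-stochastic matrix `K` is the mixture of the `{0,1}` matrices of maps `f : I → I`
with the product weights `∏ⱼ K (f j) j`, so `𝒦` is the convex hull of `𝒦̂`; as `(K, x) ↦ K x`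
is bilinear, `R(conv X) ⊆ conv (𝒦̂ X)`. Conversely `R(D)` is convex for a convex set `D` of
nonnegative states: `K₁ y₁ + K₂ y₂ = K (y₁ + y₂)`, where column `j` of `K` mixes the columns `j`
of `K₁` and `K₂` in the proportion `y₁ j : y₂ j`.
-/

open Matrix

theorem LinearMap.image2_convexHull_subset {𝕜 E F G : Type*} [Field 𝕜] [LinearOrder 𝕜]
    [IsStrictOrderedRing 𝕜] [AddCommGroup E] [AddCommGroup F] [AddCommGroup G] [Module 𝕜 E]
    [Module 𝕜 F] [Module 𝕜 G] (f : E →ₗ[𝕜] F →ₗ[𝕜] G) (s : Set E) (t : Set F) :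
    Set.image2 (fun x y => f x y) (convexHull 𝕜 s) (convexHull 𝕜 t) ⊆
      convexHull 𝕜 (Set.image2 (fun x y => f x y) s t) := by
  rintro _ ⟨x, hx, y, hy, rfl⟩
  have hs : s ⊆ (f.flip y) ⁻¹' convexHull 𝕜 (Set.image2 (fun x y => f x y) s t) := by
    intro x' hx'
    have hx'y : f x' y ∈ f x' '' convexHull 𝕜 t := Set.mem_image_of_mem _ hy
    rw [LinearMap.image_convexHull] at hx'y
    have himage : f x' '' t ⊆ Set.image2 (fun x y => f x y) s t :=
      Set.image_subset_iff.2 fun y' hy' => Set.mem_image2_of_mem hx' hy'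
    exact convexHull_mono himage hx'y
  exact ((convex_convexHull 𝕜 _).linear_preimage (f.flip y)).convexHull_subset_iff.2 hs hx

variable {I : Type*} [Fintype I]

section Extreme

variable [DecidableEq I]

def deterministicMatrix (f : I → I) : Matrix I I ℝ :=
  Matrix.of fun i j => if i = f j then 1 else 0

theorem isExtreme01_deterministicMatrix {A : Matrix I I ℝ} {f : I → I}
    (hf : ∀ j, A (f j) j ≠ 0) : IsExtreme01 A (deterministicMatrix f) := by
  refine ⟨⟨fun i j => ?_, fun j => ?_, fun i j hA => ?_⟩, fun i j => ?_⟩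
  · simp only [deterministicMatrix, Matrix.of_apply]; split_ifs <;> norm_num
  · simp [deterministicMatrix]
  · rw [deterministicMatrix, Matrix.of_apply, if_neg]
    rintro rfl
    exact hf j hA
  · simp only [deterministicMatrix, Matrix.of_apply]; split_ifs <;> simp

theorem sum_prod_mul_ite_eq {K : Matrix I I ℝ} (hK : ∀ j, ∑ i, K i j = 1) (i j₀ : I) :
    ∑ f : I → I, (∏ j, K (f j) j) * (if i = f j₀ then 1 else 0) = K i j₀ := by
  -- Putting the indicator of `i' = i` into factor `j₀` makes the sum over maps a product of
  -- column sums.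
  -- Putting the indicator of `i = i'` into factor `j₀` makes the sum over maps a product of
  -- column sums.
  set g : I → I → ℝ := fun j i' => K i' j * if j = j₀ then (if i = i' then 1 else 0) else 1
  have hterm : ∀ f : I → I, (∏ j, K (f j) j) * (if i = f j₀ then 1 else 0) = ∏ j, g j (f j) := by
    intro f
    simp only [g, prod_mul_distrib, prod_ite_eq', mem_univ, if_true]
  have hcol : ∀ j, ∑ i', g j i' = if j = j₀ then K i j₀ else 1 := by
    intro j
    by_cases hj : j = j₀
    · subst hj; simp [g]
    · simp [g, hj, hK j]
  simp_rw [hterm, ← Fintype.prod_sum g, hcol, prod_ite_eq', mem_univ, if_true]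

theorem sum_prod_smul_deterministicMatrix {K : Matrix I I ℝ} (hK : ∀ j, ∑ i, K i j = 1) :
    ∑ f : I → I, (∏ j, K (f j) j) • deterministicMatrix f = K := by
  ext i j
  simp only [Matrix.sum_apply, Matrix.smul_apply, smul_eq_mul, deterministicMatrix,
    Matrix.of_apply]
  exact sum_prod_mul_ite_eq hK i j

theorem sum_prod_eq_one {K : Matrix I I ℝ} (hK : ∀ j, ∑ i, K i j = 1) :
    ∑ f : I → I, ∏ j, K (f j) j = 1 := by
  rw [← Fintype.prod_sum fun j i => K i j]
  simp [hK]

theorem IsStoch.mem_convexHull_isExtreme01 {A K : Matrix I I ℝ} (hK : IsStoch A K) :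
    K ∈ convexHull ℝ {M | IsExtreme01 A M} := by
  obtain ⟨hnonneg, hsum, hsupp⟩ := hK
  set w : (I → I) → ℝ := fun f => ∏ j, K (f j) j
  have hw : ∀ f ∈ univ.filter (w · ≠ 0),
      deterministicMatrix f ∈ convexHull ℝ {M | IsExtreme01 A M} := by
    intro f hf
    refine subset_convexHull ℝ _ (isExtreme01_deterministicMatrix fun j hA => ?_)
    exact (mem_filter.1 hf).2 (prod_eq_zero (mem_univ j) (hsupp _ _ hA))
  have hcomb := (convex_convexHull ℝ {M | IsExtreme01 A M}).sum_mem
    (fun f _ => prod_nonneg fun j _ => hnonneg _ _)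
    (by rw [sum_filter_ne_zero]; exact sum_prod_eq_one hsum) hw
  rwa [sum_filter_of_ne fun f _ h => left_ne_zero_of_smul h,
    sum_prod_smul_deterministicMatrix hsum] at hcomb

end Extreme

noncomputable def mixColumns (K₁ K₂ : Matrix I I ℝ) (y₁ y₂ : I → ℝ) : Matrix I I ℝ :=
  Matrix.of fun i j =>
    if y₁ j + y₂ j = 0 then K₁ i j else (y₁ j * K₁ i j + y₂ j * K₂ i j) / (y₁ j + y₂ j)

section Mix

variable {A K₁ K₂ : Matrix I I ℝ} {y₁ y₂ : I → ℝ}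

theorem IsStoch.mixColumns (h₁ : IsStoch A K₁) (h₂ : IsStoch A K₂) (hy₁ : 0 ≤ y₁)
    (hy₂ : 0 ≤ y₂) : IsStoch A (mixColumns K₁ K₂ y₁ y₂) := by
  obtain ⟨hnonneg₁, hsum₁, hsupp₁⟩ := h₁
  obtain ⟨hnonneg₂, hsum₂, hsupp₂⟩ := h₂
  refine ⟨fun i j => ?_, fun j => ?_, fun i j hA => ?_⟩ <;>
    simp only [_root_.mixColumns, Matrix.of_apply] <;> split_ifs with hj
  · exact hnonneg₁ i j
  · exact div_nonneg (add_nonneg (mul_nonneg (hy₁ j) (hnonneg₁ i j))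
      (mul_nonneg (hy₂ j) (hnonneg₂ i j))) (add_nonneg (hy₁ j) (hy₂ j))
  · exact hsum₁ j
  · rw [← sum_div, sum_add_distrib, ← mul_sum, ← mul_sum, hsum₁, hsum₂, mul_one, mul_one,
      div_self hj]
  · exact hsupp₁ i j hA
  · simp [hsupp₁ i j hA, hsupp₂ i j hA]

theorem mixColumns_mulVec_add (hy₁ : 0 ≤ y₁) (hy₂ : 0 ≤ y₂) :
    mixColumns K₁ K₂ y₁ y₂ *ᵥ (y₁ + y₂) = K₁ *ᵥ y₁ + K₂ *ᵥ y₂ := by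
  ext i
  simp only [Matrix.mulVec, dotProduct, Pi.add_apply, ← sum_add_distrib]
  refine sum_congr rfl fun j _ => ?_
  simp only [mixColumns, Matrix.of_apply]
  split_ifs with hj
  · obtain ⟨h₁, h₂⟩ := (add_eq_zero_iff_of_nonneg (hy₁ j) (hy₂ j)).1 hj
    simp [h₁, h₂]
  · field_simp

end Mix

/-- The one-step reachable set `R(D) = {K x : K ∈ 𝒦, x ∈ D}`. -/
def reachableSet (A : Matrix I I ℝ) (D : Set (I → ℝ)) : Set (I → ℝ) :=
  {v | ∃ K x0, IsStoch A K ∧ x0 ∈ D ∧ v = K *ᵥ x0}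

theorem convex_reachableSet {A : Matrix I I ℝ} {D : Set (I → ℝ)} (hD : Convex ℝ D)
    (hD₀ : ∀ x ∈ D, 0 ≤ x) : Convex ℝ (reachableSet A D) := by
  rintro _ ⟨K₁, x₁, h₁, hx₁, rfl⟩ _ ⟨K₂, x₂, h₂, hx₂, rfl⟩ a b ha hb hab
  have hy₁ : 0 ≤ a • x₁ := smul_nonneg ha (hD₀ x₁ hx₁)
  have hy₂ : 0 ≤ b • x₂ := smul_nonneg hb (hD₀ x₂ hx₂)
  refine ⟨mixColumns K₁ K₂ (a • x₁) (b • x₂), a • x₁ + b • x₂, h₁.mixColumns h₂ hy₁ hy₂,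
    hD hx₁ hx₂ ha hb hab, ?_⟩
  rw [mixColumns_mulVec_add hy₁ hy₂, Matrix.mulVec_smul, Matrix.mulVec_smul]

theorem reachableSet_convexHull_subset [DecidableEq I] (A : Matrix I I ℝ) (X : Set (I → ℝ)) :
    reachableSet A (convexHull ℝ X) ⊆
      convexHull ℝ (Set.image2 (· *ᵥ ·) {K | IsExtreme01 A K} X) := by
  rintro _ ⟨K, x, hK, hx, rfl⟩
  exact (Matrix.mulVecBilin ℝ ℝ).image2_convexHull_subset _ _
    (Set.mem_image2_of_mem hK.mem_convexHull_isExtreme01 hx)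

theorem stmt17_general {N m : ℕ} (A : Matrix (Fin N) (Fin N) ℝ)
    (xs : Fin m → Fin N → ℝ) (hxs : ∀ s i, 0 ≤ xs s i) :
    {v : Fin N → ℝ | ∃ K x0, IsStoch A K ∧ x0 ∈ convexHull ℝ (Set.range xs) ∧
        v = K.mulVec x0}
      = convexHull ℝ
        {v : Fin N → ℝ | ∃ K s, IsExtreme01 A K ∧ v = K.mulVec (xs s)} := by
  have hgen : {v : Fin N → ℝ | ∃ K s, IsExtreme01 A K ∧ v = K *ᵥ xs s} =
      Set.image2 (· *ᵥ ·) {K | IsExtreme01 A K} (Set.range xs) := by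
    ext v
    simp [Set.mem_image2, eq_comm]
  have hnonneg : ∀ x ∈ convexHull ℝ (Set.range xs), 0 ≤ x :=
    (convex_Ici 0).convexHull_subset_iff.2 (Set.range_subset_iff.2 hxs)
  rw [hgen]
  refine (reachableSet_convexHull_subset A _).antisymm
    ((convex_reachableSet (convex_convexHull ℝ _) hnonneg).convexHull_subset_iff.2 ?_)
  rintro _ ⟨K, hK, x, hx, rfl⟩
  exact ⟨K, x, hK.1, subset_convexHull ℝ _ hx, rfl⟩

theorem stmt17 {N m : ℕ} (A : Matrix (Fin N) (Fin N) ℝ)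
    (hA01 : ∀ i j, A i j = 0 ∨ A i j = 1)
    (hcol : ∀ j, ∃ i, A i j = 1)
    (xs : Fin m → Fin N → ℝ) (hxs : ∀ s i, 0 ≤ xs s i) :
    {v : Fin N → ℝ | ∃ K x0, IsStoch A K ∧ x0 ∈ convexHull ℝ (Set.range xs) ∧
        v = K.mulVec x0}
      = convexHull ℝ
        {v : Fin N → ℝ | ∃ K s, IsExtreme01 A K ∧ v = K.mulVec (xs s)} :=
  stmt17_general A xs hxs
end
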